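/- arXiv:2103.10810 — 4 statements merged into one kernel-verified Lean document; each statement's English description precedes it below -/
import Mathlib

section
/- Let X be a metric space, μ_n probability measures on X converging weakly to μ, and f_n, b_n, f, b : X → ℝ Borel measurable with |f_n| ≤ b_n for all n. Suppose f_n converges continuously to f (i.e., x_n → x implies f_n(x_n) → f(x)), b_n converges continuously to b, and ∫ b_n dμ_n → ∫ b dμ < ∞. Then ∫ f_n dμ_n → ∫ f dμ. -/
open MeasureTheory Filter Topology BoundedContinuousFunction

section aux
variable {X : Type*} [MetricSpace X] [Nonempty X]

/-- Recursive index extraction. -/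
def iterChoice (N : ℕ → ℕ) : ℕ → ℕ
  | 0 => 0
  | k + 1 => N (iterChoice N k) + 1

/-- Lipschitz inf-convolution regularization. -/
noncomputable def vfun (g : ℕ → X → ℝ) (m : ℕ) (x : X) : ℝ :=
  ⨅ p : {n : ℕ // m ≤ n} × X, (g p.1.1 p.2 + m * dist x p.2)

variable {g : ℕ → X → ℝ} (hg0 : ∀ n x, 0 ≤ g n x)
include hg0

lemma vfun_bdd (m : ℕ) (x : X) :
    BddBelow (Set.range fun p : {n : ℕ // m ≤ n} × X => g p.1.1 p.2 + m * dist x p.2) := by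
  refine ⟨0, ?_⟩
  rintro _ ⟨p, rfl⟩
  exact add_nonneg (hg0 _ _) (by positivity)

lemma vfun_le (m : ℕ) (x : X) {n : ℕ} (hn : m ≤ n) (y : X) :
    vfun g m x ≤ g n y + m * dist x y :=
  ciInf_le (vfun_bdd hg0 m x) (⟨⟨n, hn⟩, y⟩)

lemma vfun_nonneg (m : ℕ) (x : X) : 0 ≤ vfun g m x :=
  le_ciInf fun p => add_nonneg (hg0 _ _) (by positivity)

lemma vfun_le_self (m : ℕ) (x : X) {n : ℕ} (hn : m ≤ n) : vfun g m x ≤ g n x := by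
  have := vfun_le hg0 m x hn x
  simpa using this

lemma vfun_mono (x : X) : Monotone fun m => vfun g m x := by
  intro m m' hmm'
  refine le_ciInf fun p => ?_
  calc vfun g m x ≤ g p.1.1 p.2 + m * dist x p.2 := vfun_le hg0 m x (hmm'.trans p.1.2) p.2
    _ ≤ g p.1.1 p.2 + m' * dist x p.2 := by
        gcongr

lemma vfun_lip (m : ℕ) (x x' : X) : vfun g m x ≤ vfun g m x' + m * dist x x' := by
  rw [← sub_le_iff_le_add]
  refine le_ciInf fun p => ?_
  rw [sub_le_iff_le_add]
  calc vfun g m x ≤ g p.1.1 p.2 + m * dist x p.2 := vfun_le hg0 m x p.1.2 p.2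
    _ ≤ g p.1.1 p.2 + m * (dist x' p.2 + dist x x') := by
        gcongr
        exact (dist_triangle x x' p.2).trans_eq (add_comm _ _)
    _ = g p.1.1 p.2 + m * dist x' p.2 + m * dist x x' := by ring

lemma vfun_dist (m : ℕ) (x x' : X) : dist (vfun g m x) (vfun g m x') ≤ m * dist x x' := by
  rw [Real.dist_eq, abs_sub_le_iff]
  constructor
  · linarith [vfun_lip hg0 m x x']
  · have := vfun_lip hg0 m x' x
    rw [dist_comm x' x] at this
    linarith

lemma vfun_le_glim {glim : X → ℝ} (hgc : ∀ (x : X) (xs : ℕ → X), Tendsto xs atTop (𝓝 x) →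
      Tendsto (fun n => g n (xs n)) atTop (𝓝 (glim x))) (m : ℕ) (x : X) :
    vfun g m x ≤ glim x := by
  refine ge_of_tendsto (hgc x (fun _ => x) tendsto_const_nhds) ?_
  filter_upwards [eventually_ge_atTop m] with n hn
  exact vfun_le_self hg0 m x hn

lemma vfun_tendsto {glim : X → ℝ} (hgc : ∀ (x : X) (xs : ℕ → X), Tendsto xs atTop (𝓝 x) →
      Tendsto (fun n => g n (xs n)) atTop (𝓝 (glim x))) (x : X) :
    Tendsto (fun m => vfun g m x) atTop (𝓝 (glim x)) := by
  have hbdd : BddAbove (Set.range fun m => vfun g m x) :=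
    ⟨glim x, by rintro _ ⟨m, rfl⟩; exact vfun_le_glim hg0 hgc m x⟩
  have hts := tendsto_atTop_ciSup (vfun_mono hg0 x) hbdd
  set L := ⨆ m, vfun g m x with hL
  have hLle : L ≤ glim x := ciSup_le fun m => vfun_le_glim hg0 hgc m x
  have hL0 : 0 ≤ L := (vfun_nonneg hg0 0 x).trans (le_ciSup hbdd 0)
  rcases eq_or_lt_of_le hLle with h | h
  · rwa [h] at hts
  · exfalso
    set ε := glim x - L with hε
    have hεpos : 0 < ε := by simp [hε]; linarith
    -- for each m extract near-minimizers
    have H : ∀ m : ℕ, ∃ n : ℕ, ∃ y : X, m ≤ n ∧ g n y + m * dist x y < L + ε / 2 := by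
      intro m
      have h1 : vfun g m x < L + ε / 2 := by
        have := le_ciSup hbdd m
        linarith
      obtain ⟨p, hp⟩ := exists_lt_of_ciInf_lt h1
      exact ⟨p.1.1, p.2, p.1.2, hp⟩
    choose N Y hN hlt using H
    -- recursive subsequence
    set M : ℕ → ℕ := iterChoice N with hM
    have hMsucc : ∀ k, M (k + 1) = N (M k) + 1 := fun k => rfl
    have hSsm : StrictMono fun k => N (M k) := by
      refine strictMono_nat_of_lt_succ fun k => ?_
      calc N (M k) < N (M k) + 1 := Nat.lt_succ_self _
        _ = M (k+1) := (hMsucc k).symm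
        _ ≤ N (M (k+1)) := hN _
    have hMk : ∀ k, k ≤ M k := by
      intro k
      induction k with
      | zero => exact Nat.zero_le _
      | succ k ih =>
        calc k + 1 ≤ M k + 1 := by omega
          _ ≤ N (M k) + 1 := by have := hN (M k); omega
          _ = M (k + 1) := (hMsucc k).symm
    set S : ℕ → ℕ := fun k => N (M k) with hS
    have hSk : ∀ k, k ≤ S k := fun k => (hMk k).trans (hN (M k))
    -- distance bound
    have hdistY : ∀ k, 1 ≤ k → dist x (Y (M k)) ≤ (L + ε / 2) / k := by
      intro k hk
      have h1 := hlt (M k)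
      have h2 : ((M k : ℕ) : ℝ) * dist x (Y (M k)) < L + ε / 2 := by
        have := hg0 (N (M k)) (Y (M k)); linarith
      have hMk' : (1 : ℝ) ≤ ((M k : ℕ) : ℝ) := by exact_mod_cast hk.trans (hMk k)
      have hkM : (k : ℝ) ≤ ((M k : ℕ) : ℝ) := by exact_mod_cast hMk k
      have hkpos : (0 : ℝ) < k := by exact_mod_cast hk
      rw [le_div_iff₀ hkpos]
      nlinarith [dist_nonneg (x := x) (y := Y (M k))]
    classical
    set z : ℕ → X := fun j => if h : ∃ k, S k = j then Y (M h.choose) else x with hz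
    have hzS : ∀ k, z (S k) = Y (M k) := by
      intro k
      have h : ∃ k', S k' = S k := ⟨k, rfl⟩
      have hck : h.choose = k := hSsm.injective h.choose_spec
      simp only [hz, dif_pos h, hck]
    have hztend : Tendsto z atTop (𝓝 x) := by
      rw [Metric.tendsto_atTop]
      intro δ hδ
      obtain ⟨K, hK⟩ := exists_nat_gt ((L + ε / 2) / δ)
      have hKδ : (L + ε / 2) / (K + 1 : ℕ) < δ := by
        rw [div_lt_iff₀ (by positivity)]
        rw [div_lt_iff₀ hδ] at hK
        push_cast
        nlinarith
      refine ⟨S (K + 1), fun j hj => ?_⟩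
      by_cases h : ∃ k, S k = j
      · have hSc : S h.choose = j := h.choose_spec
        have hkK : K + 1 ≤ h.choose := by
          by_contra hc
          push_neg at hc
          have := hSsm (show h.choose < K + 1 by omega)
          omega
        have hd : dist x (Y (M h.choose)) ≤ (L + ε / 2) / h.choose :=
          hdistY h.choose (by omega)
        have hdd : (L + ε / 2) / (h.choose : ℝ) ≤ (L + ε / 2) / (K + 1 : ℕ) := by
          apply div_le_div_of_nonneg_left (by linarith) (by positivity)
          exact_mod_cast hkK
        calc dist (z j) x = dist x (Y (M h.choose)) := by
              rw [hz]; simp only [dif_pos h]; exact dist_comm _ _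
          _ < δ := by linarith
      · have : z j = x := by rw [hz]; simp only [dif_neg h]
        rw [this]
        simpa using hδ
    have hgz := hgc x z hztend
    have hev : ∀ᶠ j in atTop, L + ε / 2 < g j (z j) :=
      hgz.eventually (eventually_gt_nhds (by rw [hε]; linarith))
    obtain ⟨J, hJ⟩ := eventually_atTop.1 hev
    have h1 := hJ (S J) (le_trans (hSk J) le_rfl)
    rw [hzS J] at h1
    have h2 := hlt (M J)
    have h3 : (0:ℝ) ≤ (M J : ℕ) * dist x (Y (M J)) := by positivity
    have : g (S J) (Y (M J)) = g (N (M J)) (Y (M J)) := rfl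
    linarith [this ▸ h1]
end aux

/-- Fatou-type lemma for weakly converging measures. -/
lemma key_lemma {X : Type*} [MetricSpace X] [MeasurableSpace X] [BorelSpace X] [Nonempty X]
    (μseq : ℕ → Measure X) (μ : Measure X)
    [∀ n, IsProbabilityMeasure (μseq n)] [IsProbabilityMeasure μ]
    (hweak : ∀ g : BoundedContinuousFunction X ℝ,
      Tendsto (fun n => ∫ x, g x ∂(μseq n)) atTop (𝓝 (∫ x, g x ∂μ)))
    (g : ℕ → X → ℝ) (glim : X → ℝ)
    (hgmeas : ∀ n, Measurable (g n)) (hglimmeas : Measurable glim)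
    (hg0 : ∀ n x, 0 ≤ g n x)
    (hgc : ∀ (x : X) (xs : ℕ → X), Tendsto xs atTop (𝓝 x) →
      Tendsto (fun n => g n (xs n)) atTop (𝓝 (glim x)))
    (hgint : ∀ n, Integrable (g n) (μseq n)) (hglimint : Integrable glim μ)
    {ε : ℝ} (hε : 0 < ε) :
    ∀ᶠ n in atTop, ∫ x, glim x ∂μ - ε ≤ ∫ x, g n x ∂(μseq n) := by
  -- truncated regularizations as bounded continuous functions
  have hwcont : ∀ m : ℕ, Continuous fun x => min (vfun g m x) m := by
    intro m
    refine Continuous.min ?_ continuous_const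
    refine (LipschitzWith.of_dist_le_mul (K := m) fun x y => ?_).continuous
    simpa using vfun_dist hg0 m x y
  set w : ℕ → BoundedContinuousFunction X ℝ := fun m =>
    BoundedContinuousFunction.mkOfBound ⟨fun x => min (vfun g m x) m, hwcont m⟩ m
      (by
        intro x y
        simp only [ContinuousMap.coe_mk]
        rw [Real.dist_eq, abs_sub_le_iff]
        have h1 := vfun_nonneg hg0 m x
        have h2 := vfun_nonneg hg0 m y
        have h3 : min (vfun g m x) (m:ℝ) ≤ m := min_le_right _ _
        have h4 : min (vfun g m y) (m:ℝ) ≤ m := min_le_right _ _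
        have h5 : (0:ℝ) ≤ min (vfun g m x) (m:ℝ) := le_min h1 (by positivity)
        have h6 : (0:ℝ) ≤ min (vfun g m y) (m:ℝ) := le_min h2 (by positivity)
        constructor <;> linarith) with hw
  have hwapp : ∀ m x, w m x = min (vfun g m x) m := fun m x => rfl
  -- monotone convergence of ∫ w m dμ to ∫ glim dμ
  have hwmono : ∀ x, Monotone fun m => w m x := by
    intro x m m' hmm'
    simp only [hwapp]
    exact min_le_min (vfun_mono hg0 x hmm') (by exact_mod_cast hmm')
  have hwtend : ∀ x, Tendsto (fun m => w m x) atTop (𝓝 (glim x)) := by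
    intro x
    have hv := vfun_tendsto hg0 hgc x
    have : ∀ᶠ m : ℕ in atTop, w m x = vfun g m x := by
      obtain ⟨M, hM⟩ := exists_nat_ge (glim x)
      filter_upwards [eventually_ge_atTop M] with m hm
      rw [hwapp, min_eq_left]
      calc vfun g m x ≤ glim x := vfun_le_glim hg0 hgc m x
        _ ≤ M := hM
        _ ≤ m := by exact_mod_cast hm
    exact Tendsto.congr' (this.mono fun m hm => hm.symm) hv
  have hwint : ∀ m, Integrable (w m) μ := fun m => (w m).integrable μ
  have hmc : Tendsto (fun m => ∫ x, w m x ∂μ) atTop (𝓝 (∫ x, glim x ∂μ)) :=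
    integral_tendsto_of_tendsto_of_monotone hwint hglimint
      (Eventually.of_forall hwmono) (Eventually.of_forall hwtend)
  -- choose m with ∫ w m close
  have hεpos : 0 < ε / 2 := by linarith
  obtain ⟨m, hm⟩ := (hmc.eventually (eventually_gt_nhds
    (show ∫ x, glim x ∂μ - ε / 2 < ∫ x, glim x ∂μ by linarith))).exists
  have hwn := hweak (w m)
  have hev : ∀ᶠ n in atTop, ∫ x, (w m) x ∂μ - ε / 2 < ∫ x, (w m) x ∂(μseq n) :=
    hwn.eventually (eventually_gt_nhds (by linarith))
  filter_upwards [hev, eventually_ge_atTop m] with n hn hnm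
  have hle : ∫ x, (w m) x ∂(μseq n) ≤ ∫ x, g n x ∂(μseq n) := by
    apply integral_mono ((w m).integrable _) (hgint n)
    intro x
    rw [hwapp]
    exact le_trans (min_le_left _ _) (vfun_le_self hg0 m x hnm)
  linarith


/-- Generalized dominated convergence theorem (Langen): if `μ_n → μ` weakly,
`|f_n| ≤ b_n`, `f_n → f` and `b_n → b` continuously, and `∫ b_n dμ_n → ∫ b dμ < ∞`,
then `∫ f_n dμ_n → ∫ f dμ`. -/
theorem stmt_8 {X : Type*} [MetricSpace X] [MeasurableSpace X] [BorelSpace X]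
    (μseq : ℕ → Measure X) (μ : Measure X)
    [∀ n, IsProbabilityMeasure (μseq n)] [IsProbabilityMeasure μ]
    (hweak : ∀ g : BoundedContinuousFunction X ℝ,
      Tendsto (fun n => ∫ x, g x ∂(μseq n)) atTop (𝓝 (∫ x, g x ∂μ)))
    (f b : ℕ → X → ℝ) (flim blim : X → ℝ)
    (hfmeas : ∀ n, Measurable (f n)) (hbmeas : ∀ n, Measurable (b n))
    (hflimmeas : Measurable flim) (hblimmeas : Measurable blim)
    (hdom : ∀ n x, |f n x| ≤ b n x)
    (hfc : ∀ (x : X) (xs : ℕ → X), Tendsto xs atTop (𝓝 x) →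
      Tendsto (fun n => f n (xs n)) atTop (𝓝 (flim x)))
    (hbc : ∀ (x : X) (xs : ℕ → X), Tendsto xs atTop (𝓝 x) →
      Tendsto (fun n => b n (xs n)) atTop (𝓝 (blim x)))
    (hbint : ∀ n, Integrable (b n) (μseq n)) (hblimint : Integrable blim μ)
    (hbconv : Tendsto (fun n => ∫ x, b n x ∂(μseq n)) atTop (𝓝 (∫ x, blim x ∂μ))) :
    Tendsto (fun n => ∫ x, f n x ∂(μseq n)) atTop (𝓝 (∫ x, flim x ∂μ)) := by
  have hne : Nonempty X := by
    by_contra h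
    rw [not_nonempty_iff] at h
    simpa [Measure.eq_zero_of_isEmpty μ] using (measure_univ (μ := μ))
  have hfl : ∀ x, Tendsto (fun n => f n x) atTop (𝓝 (flim x)) :=
    fun x => hfc x _ tendsto_const_nhds
  have hbl : ∀ x, Tendsto (fun n => b n x) atTop (𝓝 (blim x)) :=
    fun x => hbc x _ tendsto_const_nhds
  have hdoml : ∀ x, |flim x| ≤ blim x := fun x =>
    le_of_tendsto_of_tendsto' (hfl x).abs (hbl x) (fun n => hdom n x)
  have hfint : ∀ n, Integrable (f n) (μseq n) := fun n =>
    Integrable.mono' (hbint n) (hfmeas n).aestronglyMeasurable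
      (Eventually.of_forall fun x => by simpa [Real.norm_eq_abs] using hdom n x)
  have hflimint : Integrable flim μ :=
    Integrable.mono' hblimint hflimmeas.aestronglyMeasurable
      (Eventually.of_forall fun x => by simpa [Real.norm_eq_abs] using hdoml x)
  have key₁ := fun {ε : ℝ} (hε : 0 < ε) => key_lemma μseq μ hweak
      (fun n x => b n x + f n x) (fun x => blim x + flim x)
      (fun n => (hbmeas n).add (hfmeas n)) (hblimmeas.add hflimmeas)
      (fun n x => by show (0:ℝ) ≤ b n x + f n x; have := (abs_le.1 (hdom n x)).1; linarith)
      (fun x xs hxs => (hbc x xs hxs).add (hfc x xs hxs))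
      (fun n => (hbint n).add (hfint n)) (hblimint.add hflimint) hε
  have key₂ := fun {ε : ℝ} (hε : 0 < ε) => key_lemma μseq μ hweak
      (fun n x => b n x - f n x) (fun x => blim x - flim x)
      (fun n => (hbmeas n).sub (hfmeas n)) (hblimmeas.sub hflimmeas)
      (fun n x => by show (0:ℝ) ≤ b n x - f n x; have := (abs_le.1 (hdom n x)).2; linarith)
      (fun x xs hxs => (hbc x xs hxs).sub (hfc x xs hxs))
      (fun n => (hbint n).sub (hfint n)) (hblimint.sub hflimint) hε
  rw [Metric.tendsto_atTop]
  intro ε hε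
  have hε4 : 0 < ε / 4 := by linarith
  have h3 : ∀ᶠ n in atTop, dist (∫ x, b n x ∂(μseq n)) (∫ x, blim x ∂μ) < ε / 4 :=
    hbconv.eventually (Metric.ball_mem_nhds _ hε4)
  have hall := (key₁ hε4).and ((key₂ hε4).and h3)
  obtain ⟨N, hN⟩ := eventually_atTop.1 hall
  refine ⟨N, fun n hn => ?_⟩
  obtain ⟨H1, H2, H3⟩ := hN n hn
  rw [integral_add (hbint n) (hfint n), integral_add hblimint hflimint] at H1
  rw [integral_sub (hbint n) (hfint n), integral_sub hblimint hflimint] at H2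
  rw [Real.dist_eq, abs_lt] at H3 ⊢
  constructor <;> linarith
end

section
/- Let π_n, π be probability measures on ℝᵈ with finite second moment such that π_n → π in total variation and ∫‖x‖² dπ_n → ∫‖x‖² dπ, and let B_n, B be measurable sets with π(B) > 0 and π(B_n Δ B) → 0 and π_n(B_n) → π(B). Then (1/π_n(B_n)) ∫_{B_n} x π_n(dx) → (1/π(B)) ∫_B x π(dx) in ℝᵈ. -/
open MeasureTheory Filter Topology symmDiff

/-- Total variation distance between two measures. -/
noncomputable def tvDist {X : Type*} [MeasurableSpace X] (μ ν : MeasureTheory.Measure X) : ℝ :=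
  sSup {r : ℝ | ∃ g : X → ℝ, Measurable g ∧ (∀ x, |g x| ≤ 1) ∧
    r = |(∫ x, g x ∂μ) - ∫ x, g x ∂ν|}

open Set

/-! Split `x = x 1{‖x‖ ≤ R} + x 1{‖x‖ > R}`. Testing the bounded part against a functional of
norm at most one shows that its integrals under `π_n` and `π` differ by at most `R · tvDist`,
while by Chebyshev the tail contributes at most `∫ ‖x‖² / R` under each measure. Since the second
moments converge, letting `n → ∞` and then `R → ∞` gives `∫_{B_n} x dπ_n - ∫_{B_n} x dπ → 0`;
absolute continuity of `A ↦ ∫_A x dπ` gives `∫_{B_n} x dπ → ∫_B x dπ`, and the masses converge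
to `π(B) > 0`. -/

lemma tendsto_of_dist_le_mul_add_div_add {ι α : Type*} [PseudoMetricSpace α] {l : Filter ι}
    {u : ι → α} {a : α} {t c s : ι → ℝ} {c₀ : ℝ} (ht : Tendsto t l (𝓝 0))
    (hc : Tendsto c l (𝓝 c₀)) (hs : Tendsto s l (𝓝 0))
    (h : ∀ R > 0, ∀ i, dist (u i) a ≤ R * t i + c i / R + s i) : Tendsto u l (𝓝 a) := by
  rw [Metric.tendsto_nhds]
  intro ε hε
  obtain ⟨R, hR, hRε⟩ : ∃ R > 0, c₀ / R < ε :=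
    ((eventually_gt_atTop 0).and
      ((tendsto_const_nhds.div_atTop tendsto_id).eventually (gt_mem_nhds hε))).exists
  have hlim : Tendsto (fun i => R * t i + c i / R + s i) l (𝓝 (R * 0 + c₀ / R + 0)) :=
    ((ht.const_mul R).add (hc.div_const R)).add hs
  filter_upwards [hlim.eventually (gt_mem_nhds (by simpa using hRε))] with i hi
  exact (h R hR i).trans_lt hi

lemma MeasureTheory.Integrable.of_norm_sq {X E : Type*} [MeasurableSpace X]
    [NormedAddCommGroup E] {μ : Measure X} [IsFiniteMeasure μ] {f : X → E}
    (hf : AEStronglyMeasurable f μ) (h2 : Integrable (fun x => ‖f x‖ ^ 2) μ) :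
    Integrable f μ :=
  ((memLp_two_iff_integrable_sq_norm hf).2 h2).integrable one_le_two

variable {X E : Type*} [MeasurableSpace X] [NormedAddCommGroup E] [NormedSpace ℝ E]

lemma abs_integral_sub_le_tvDist (μ ν : Measure X) [IsFiniteMeasure μ] [IsFiniteMeasure ν]
    {g : X → ℝ} (hg : Measurable g) (hg1 : ∀ x, |g x| ≤ 1) :
    |∫ x, g x ∂μ - ∫ x, g x ∂ν| ≤ tvDist μ ν := by
  refine le_csSup ⟨μ.real univ + ν.real univ, ?_⟩ ⟨g, hg, hg1, rfl⟩
  rintro _ ⟨h, -, hh, rfl⟩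
  have hbound : ∀ (ρ : Measure X) [IsFiniteMeasure ρ], |∫ x, h x ∂ρ| ≤ ρ.real univ :=
    fun ρ _ => by
      simpa using norm_integral_le_of_norm_le_const (μ := ρ) (C := 1)
        (Eventually.of_forall fun x => (Real.norm_eq_abs _).trans_le (hh x))
  linarith [abs_sub (∫ x, h x ∂μ) (∫ x, h x ∂ν), hbound μ, hbound ν]

lemma norm_integral_sub_le_mul_tvDist [CompleteSpace E] (μ ν : Measure X) [IsFiniteMeasure μ]
    [IsFiniteMeasure ν] {f : X → E} (hf : StronglyMeasurable f) {R : ℝ} (hR : 0 < R)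
    (hfR : ∀ x, ‖f x‖ ≤ R) :
    ‖∫ x, f x ∂μ - ∫ x, f x ∂ν‖ ≤ R * tvDist μ ν := by
  obtain ⟨φ, hφ, hφv⟩ := exists_dual_vector'' ℝ (∫ x, f x ∂μ - ∫ x, f x ∂ν)
  have hfint : ∀ (ρ : Measure X) [IsFiniteMeasure ρ], Integrable f ρ := fun ρ _ =>
    Integrable.of_bound hf.aestronglyMeasurable R (Eventually.of_forall hfR)
  have hg1 : ∀ x, |R⁻¹ * φ (f x)| ≤ 1 := fun x => by
    rw [abs_mul, abs_inv, abs_of_pos hR, inv_mul_le_iff₀ hR, mul_one, ← Real.norm_eq_abs]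
    exact (φ.le_of_opNorm_le hφ (f x)).trans (by simpa using hfR x)
  have := abs_integral_sub_le_tvDist μ ν
    ((φ.continuous.comp_stronglyMeasurable hf).measurable.const_mul R⁻¹) hg1
  rw [integral_const_mul, integral_const_mul, ← mul_sub, abs_mul, abs_inv, abs_of_pos hR,
    inv_mul_le_iff₀ hR, φ.integral_comp_comm (hfint μ), φ.integral_comp_comm (hfint ν),
    ← map_sub, hφv] at this
  simpa using this

lemma norm_integral_indicator_lt_norm_le {μ : Measure X} {f : X → E}
    (hf2 : Integrable (fun x => ‖f x‖ ^ 2) μ) {R : ℝ} (hR : 0 < R) :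
    ‖∫ x, {x | R < ‖f x‖}.indicator f x ∂μ‖ ≤ (∫ x, ‖f x‖ ^ 2 ∂μ) / R := by
  rw [← integral_div]
  refine norm_integral_le_of_norm_le (hf2.div_const R) (Eventually.of_forall fun x => ?_)
  by_cases hx : R < ‖f x‖
  · rw [indicator_of_mem (s := {x | R < ‖f x‖}) hx, le_div_iff₀ hR]
    nlinarith [norm_nonneg (f x)]
  · rw [indicator_of_notMem (s := {x | R < ‖f x‖}) hx, norm_zero]
    positivity

lemma norm_integral_sub_le_tvDist_add [CompleteSpace E] (μ ν : Measure X) [IsFiniteMeasure μ]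
    [IsFiniteMeasure ν] {f : X → E} (hf : StronglyMeasurable f)
    (hμ : Integrable (fun x => ‖f x‖ ^ 2) μ) (hν : Integrable (fun x => ‖f x‖ ^ 2) ν)
    {R : ℝ} (hR : 0 < R) :
    ‖∫ x, f x ∂μ - ∫ x, f x ∂ν‖
      ≤ R * tvDist μ ν + ((∫ x, ‖f x‖ ^ 2 ∂μ) + ∫ x, ‖f x‖ ^ 2 ∂ν) / R := by
  set S := {x | R < ‖f x‖}
  have hS : MeasurableSet S := measurableSet_lt measurable_const hf.norm.measurable
  have hbdd : ∀ x, ‖Sᶜ.indicator f x‖ ≤ R := fun x => by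
    by_cases hx : x ∈ S
    · rw [indicator_of_notMem (notMem_compl_iff.2 hx), norm_zero]
      exact hR.le
    · rw [indicator_of_mem hx]
      exact not_lt.1 hx
  rw [← integral_add_compl hS (hμ.of_norm_sq hf.aestronglyMeasurable),
    ← integral_add_compl hS (hν.of_norm_sq hf.aestronglyMeasurable)]
  simp only [← integral_indicator hS, ← integral_indicator hS.compl]
  calc _ = ‖(∫ x, Sᶜ.indicator f x ∂μ - ∫ x, Sᶜ.indicator f x ∂ν)
          + (∫ x, S.indicator f x ∂μ - ∫ x, S.indicator f x ∂ν)‖ := by abel_nf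
    _ ≤ R * tvDist μ ν + (‖∫ x, S.indicator f x ∂μ‖ + ‖∫ x, S.indicator f x ∂ν‖) :=
        (norm_add_le _ _).trans (add_le_add
          (norm_integral_sub_le_mul_tvDist μ ν (hf.indicator hS.compl) hR hbdd)
          (norm_sub_le _ _))
    _ ≤ _ := by
        rw [add_div]
        gcongr
        exacts [norm_integral_indicator_lt_norm_le hμ hR,
          norm_integral_indicator_lt_norm_le hν hR]

lemma norm_setIntegral_sub_le_tvDist_add [CompleteSpace E] (μ ν : Measure X)
    [IsFiniteMeasure μ] [IsFiniteMeasure ν] {f : X → E} (hf : StronglyMeasurable f)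
    (hμ : Integrable (fun x => ‖f x‖ ^ 2) μ) (hν : Integrable (fun x => ‖f x‖ ^ 2) ν)
    {A : Set X} (hA : MeasurableSet A) {R : ℝ} (hR : 0 < R) :
    ‖∫ x in A, f x ∂μ - ∫ x in A, f x ∂ν‖
      ≤ R * tvDist μ ν + ((∫ x, ‖f x‖ ^ 2 ∂μ) + ∫ x, ‖f x‖ ^ 2 ∂ν) / R := by
  have hle : ∀ x, ‖A.indicator f x‖ ^ 2 ≤ ‖f x‖ ^ 2 := fun x =>
    pow_le_pow_left₀ (norm_nonneg _) (norm_indicator_le_norm_self f x) 2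
  have hint : ∀ (ρ : Measure X), Integrable (fun x => ‖f x‖ ^ 2) ρ →
      Integrable (fun x => ‖A.indicator f x‖ ^ 2) ρ := fun ρ h =>
    h.mono' ((hf.indicator hA).norm.pow 2).aestronglyMeasurable
      (Eventually.of_forall fun x => by simpa using hle x)
  have hmono : ∀ (ρ : Measure X), Integrable (fun x => ‖f x‖ ^ 2) ρ →
      ∫ x, ‖A.indicator f x‖ ^ 2 ∂ρ ≤ ∫ x, ‖f x‖ ^ 2 ∂ρ := fun ρ h =>
    integral_mono (hint ρ h) h hle
  rw [← integral_indicator hA, ← integral_indicator hA]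
  refine (norm_integral_sub_le_tvDist_add μ ν (hf.indicator hA) (hint μ hμ) (hint ν hν)
    hR).trans ?_
  gcongr _ + (?_ + ?_) / _
  exacts [hmono μ hμ, hmono ν hν]

lemma tendsto_setIntegral_of_tendsto_measure_symmDiff {ι : Type*} {l : Filter ι}
    {μ : Measure X} {f : X → E} (hf : Integrable f μ) {A : ι → Set X} {B : Set X}
    (hA : ∀ i, MeasurableSet (A i)) (hB : MeasurableSet B)
    (hAB : Tendsto (fun i => μ (A i ∆ B)) l (𝓝 0)) :
    Tendsto (fun i => ∫ x in A i, f x ∂μ) l (𝓝 (∫ x in B, f x ∂μ)) := by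
  rw [tendsto_iff_norm_sub_tendsto_zero]
  refine squeeze_zero (fun _ => norm_nonneg _) (fun i => ?_)
    (hf.norm.tendsto_setIntegral_nhds_zero hAB)
  rw [← integral_indicator (hA i), ← integral_indicator hB,
    ← integral_indicator ((hA i).symmDiff hB),
    ← integral_sub (hf.indicator (hA i)) (hf.indicator hB)]
  refine (norm_integral_le_integral_norm _).trans_eq
    (integral_congr_ae (Eventually.of_forall fun x => ?_))
  rw [← norm_indicator_eq_indicator_norm, apply_indicator_symmDiff norm_neg]

theorem stmt_12_general {d : ℕ} (πseq : ℕ → Measure (EuclideanSpace ℝ (Fin d)))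
    (π : Measure (EuclideanSpace ℝ (Fin d)))
    [∀ n, IsProbabilityMeasure (πseq n)] [IsProbabilityMeasure π]
    (h2n : ∀ n, Integrable (fun x => ‖x‖ ^ 2) (πseq n))
    (h2 : Integrable (fun x => ‖x‖ ^ 2) π)
    (hTV : Tendsto (fun n => tvDist (πseq n) π) atTop (𝓝 0))
    (hmom : Tendsto (fun n => ∫ x, ‖x‖ ^ 2 ∂(πseq n)) atTop (𝓝 (∫ x, ‖x‖ ^ 2 ∂π)))
    (Bn : ℕ → Set (EuclideanSpace ℝ (Fin d))) (B : Set (EuclideanSpace ℝ (Fin d)))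
    (hBn : ∀ n, MeasurableSet (Bn n)) (hB : MeasurableSet B)
    (hBpos : 0 < (π B).toReal)
    (hsymm : Tendsto (fun n => (π ((Bn n) ∆ B)).toReal) atTop (𝓝 0))
    (hmass : Tendsto (fun n => ((πseq n) (Bn n)).toReal) atTop (𝓝 ((π B).toReal))) :
    Tendsto (fun n => (((πseq n) (Bn n)).toReal)⁻¹ • ∫ x in Bn n, x ∂(πseq n))
      atTop (𝓝 (((π B).toReal)⁻¹ • ∫ x in B, x ∂π)) := by
  have hnear : Tendsto (fun n => dist (∫ x in Bn n, x ∂π) (∫ x in B, x ∂π)) atTop (𝓝 0) :=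
    tendsto_iff_dist_tendsto_zero.1 <| tendsto_setIntegral_of_tendsto_measure_symmDiff
      (h2.of_norm_sq aestronglyMeasurable_id) hBn hB
      ((ENNReal.tendsto_toReal_zero_iff fun _ => measure_ne_top _ _).1 hsymm)
  have hintegral : Tendsto (fun n => ∫ x in Bn n, x ∂πseq n) atTop (𝓝 (∫ x in B, x ∂π)) :=
    tendsto_of_dist_le_mul_add_div_add hTV (hmom.add tendsto_const_nhds) hnear fun R hR n =>
      (dist_triangle _ (∫ x in Bn n, x ∂π) _).trans <| add_le_add (by
        rw [dist_eq_norm]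
        exact norm_setIntegral_sub_le_tvDist_add _ _ stronglyMeasurable_id (h2n n) h2 (hBn n) hR)
        le_rfl
  exact (hmass.inv₀ hBpos.ne').smul hintegral

/-- Convergence of centroids: if `π_n → π` in total variation with convergence of second
moments, `π(B_n Δ B) → 0` and `π_n(B_n) → π(B) > 0`, then the centroids of `B_n` under
`π_n` converge to the centroid of `B` under `π`. -/
theorem stmt_12 {d : ℕ} (πseq : ℕ → Measure (EuclideanSpace ℝ (Fin d)))
    (π : Measure (EuclideanSpace ℝ (Fin d)))
    [∀ n, IsProbabilityMeasure (πseq n)] [IsProbabilityMeasure π]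
    (h2n : ∀ n, Integrable (fun x => ‖x‖ ^ 2) (πseq n))
    (h2 : Integrable (fun x => ‖x‖ ^ 2) π)
    (hidn : ∀ n, Integrable (fun x => x) (πseq n))
    (hid : Integrable (fun x => x) π)
    (hTV : Tendsto (fun n => tvDist (πseq n) π) atTop (𝓝 0))
    (hmom : Tendsto (fun n => ∫ x, ‖x‖ ^ 2 ∂(πseq n)) atTop (𝓝 (∫ x, ‖x‖ ^ 2 ∂π)))
    (Bn : ℕ → Set (EuclideanSpace ℝ (Fin d))) (B : Set (EuclideanSpace ℝ (Fin d)))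
    (hBn : ∀ n, MeasurableSet (Bn n)) (hB : MeasurableSet B)
    (hBpos : 0 < (π B).toReal)
    (hsymm : Tendsto (fun n => (π ((Bn n) ∆ B)).toReal) atTop (𝓝 0))
    (hmass : Tendsto (fun n => ((πseq n) (Bn n)).toReal) atTop (𝓝 ((π B).toReal))) :
    Tendsto (fun n => (((πseq n) (Bn n)).toReal)⁻¹ • ∫ x in Bn n, x ∂(πseq n))
      atTop (𝓝 (((π B).toReal)⁻¹ • ∫ x in B, x ∂π)) :=
  stmt_12_general πseq π h2n h2 hTV hmom Bn B hBn hB hBpos hsymm hmass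
end

section
/- Let π be a probability measure on ℝᵈ admitting a density, and suppose Q_n, Q are finite quantizers with cells {B_i^n} and {B_i} such that π(B_i^n Δ B_i) → 0 for each i. Let γ_n(i), γ(i) ∈ ℝᵈ be the centroids of cell i under π for Q_n and Q respectively (for i with π(B_i) > 0), and assume γ_n(i) → γ(i) and D := sup_{n,i} ‖γ_n(i)‖ < ∞. If ∫‖x‖² dπ < ∞, then Σ_i ∫_{B_i^n} ‖x − γ_n(i)‖² π(dx) → Σ_i ∫_{B_i} ‖x − γ(i)‖² π(dx). -/
open MeasureTheory Filter Topology symmDiff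

/-- Continuity of the quantization cost in the quantizer: if the cells `B_i^n` of `Q_n`
converge to the cells `B_i` of `Q` (in π-symmetric difference), and the centroids
`γ_n(i)` converge to `γ(i)` and are uniformly bounded, then
`Σᵢ ∫_{B_i^n} ‖x − γ_n(i)‖² dπ → Σᵢ ∫_{B_i} ‖x − γ(i)‖² dπ`. -/
theorem stmt_14 {d : ℕ} (π : Measure (EuclideanSpace ℝ (Fin d))) [IsProbabilityMeasure π]
    (hac : π ≪ MeasureTheory.volume)
    (h2 : Integrable (fun x => ‖x‖ ^ 2) π)
    (M : ℕ) (Bn : ℕ → Fin M → Set (EuclideanSpace ℝ (Fin d)))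
    (B : Fin M → Set (EuclideanSpace ℝ (Fin d)))
    (hBn : ∀ n i, MeasurableSet (Bn n i)) (hB : ∀ i, MeasurableSet (B i))
    (hsymm : ∀ i, Tendsto (fun n => (π ((Bn n i) ∆ (B i))).toReal) atTop (𝓝 0))
    (γn : ℕ → Fin M → EuclideanSpace ℝ (Fin d)) (γ : Fin M → EuclideanSpace ℝ (Fin d))
    (hγn : ∀ n i, 0 < (π (B i)).toReal →
      γn n i = ((π (Bn n i)).toReal)⁻¹ • ∫ x in Bn n i, x ∂π)
    (hγ : ∀ i, 0 < (π (B i)).toReal →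
      γ i = ((π (B i)).toReal)⁻¹ • ∫ x in B i, x ∂π)
    (hconv : ∀ i, 0 < (π (B i)).toReal → Tendsto (fun n => γn n i) atTop (𝓝 (γ i)))
    (D : ℝ) (hD : ∀ n i, ‖γn n i‖ ≤ D) :
    Tendsto (fun n => ∑ i : Fin M, ∫ x in Bn n i, ‖x - γn n i‖ ^ 2 ∂π)
      atTop (𝓝 (∑ i : Fin M, ∫ x in B i, ‖x - γ i‖ ^ 2 ∂π)) := by
  classical
  refine tendsto_finset_sum _ fun i _ => ?_
  have hD0 : 0 ≤ D := le_trans (norm_nonneg _) (hD 0 i)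
  set g : EuclideanSpace ℝ (Fin d) → ℝ := fun x => 2 * ‖x‖ ^ 2 + 2 * D ^ 2 with hgdef
  have hgint : Integrable g π := (h2.const_mul 2).add (integrable_const _)
  have hbound : ∀ (c : EuclideanSpace ℝ (Fin d)), ‖c‖ ≤ D →
      ∀ x, ‖x - c‖ ^ 2 ≤ g x := by
    intro c hc x
    have h1 : ‖x - c‖ ≤ ‖x‖ + D := (norm_sub_le _ _).trans (by linarith)
    have h2' : ‖x - c‖ ^ 2 ≤ (‖x‖ + D) ^ 2 :=
      pow_le_pow_left₀ (norm_nonneg _) h1 2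
    have hx := norm_nonneg x
    simp only [hgdef]
    nlinarith [sq_nonneg (‖x‖ - D)]
  have hcont : ∀ c : EuclideanSpace ℝ (Fin d),
      Continuous (fun x : EuclideanSpace ℝ (Fin d) => ‖x - c‖ ^ 2) :=
    fun c => ((continuous_id.sub continuous_const).norm).pow 2
  have hint : ∀ c : EuclideanSpace ℝ (Fin d), ‖c‖ ≤ D →
      Integrable (fun x => ‖x - c‖ ^ 2) π := by
    intro c hc
    refine hgint.mono' ((hcont c).aestronglyMeasurable) ?_
    filter_upwards with x
    rw [Real.norm_eq_abs, abs_of_nonneg (by positivity)]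
    exact hbound c hc x
  -- measure of symm diff tends to 0 in ℝ≥0∞
  have hsymm' : Tendsto (fun n => π ((Bn n i) ∆ (B i))) atTop (𝓝 0) := by
    have h := hsymm i
    rw [show (0 : ℝ) = (0 : ENNReal).toReal by simp] at h
    exact (ENNReal.tendsto_toReal_iff (fun n => measure_ne_top π _)
      (by simp)).mp h
  -- key bound: |∫_{Bn} h_n - ∫_{B} h_n| ≤ ∫_{Bn Δ B} g
  have hkey : ∀ n, |(∫ x in Bn n i, ‖x - γn n i‖ ^ 2 ∂π) -
      ∫ x in B i, ‖x - γn n i‖ ^ 2 ∂π| ≤ ∫ x in (Bn n i) ∆ (B i), g x ∂π := by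
    intro n
    set h : EuclideanSpace ℝ (Fin d) → ℝ := fun x => ‖x - γn n i‖ ^ 2 with hh
    have hint' : Integrable h π := hint _ (hD n i)
    have e1 : (∫ x in (Bn n i) ∩ (B i), h x ∂π) + ∫ x in Bn n i \ B i, h x ∂π
        = ∫ x in Bn n i, h x ∂π :=
      integral_inter_add_diff (hB i) hint'.integrableOn
    have e2 : (∫ x in (B i) ∩ (Bn n i), h x ∂π) + ∫ x in B i \ Bn n i, h x ∂π
        = ∫ x in B i, h x ∂π :=
      integral_inter_add_diff (hBn n i) hint'.integrableOn
    have hcap : (Bn n i) ∩ (B i) = (B i) ∩ (Bn n i) := Set.inter_comm _ _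
    have hnnh : ∀ s : Set (EuclideanSpace ℝ (Fin d)), MeasurableSet s →
        0 ≤ ∫ x in s, h x ∂π := by
      intro s hs; exact setIntegral_nonneg hs (fun x _ => by positivity)
    have hle : ∀ s : Set (EuclideanSpace ℝ (Fin d)), MeasurableSet s →
        (∫ x in s, h x ∂π) ≤ ∫ x in s, g x ∂π := by
      intro s hs
      exact setIntegral_mono_on hint'.integrableOn hgint.integrableOn hs
        (fun x _ => hbound _ (hD n i) x)
    have hunion : ∫ x in (Bn n i) ∆ (B i), g x ∂π
        = (∫ x in Bn n i \ B i, g x ∂π) + ∫ x in B i \ Bn n i, g x ∂π := by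
      rw [Set.symmDiff_def]
      exact setIntegral_union (disjoint_sdiff_sdiff) ((hB i).diff (hBn n i))
        hgint.integrableOn hgint.integrableOn
    have b1 := hle _ ((hBn n i).diff (hB i))
    have b2 := hle _ ((hB i).diff (hBn n i))
    have n1 : (0:ℝ) ≤ ∫ x in Bn n i \ B i, h x ∂π := hnnh _ ((hBn n i).diff (hB i))
    have n2 : (0:ℝ) ≤ ∫ x in B i \ Bn n i, h x ∂π := hnnh _ ((hB i).diff (hBn n i))
    rw [abs_le]
    constructor <;> [skip; skip] <;>
      · rw [← e1, ← e2, hcap]; rw [hunion]; linarith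
  -- the symm-diff integral tends to 0
  have hsd0 : Tendsto (fun n => ∫ x in (Bn n i) ∆ (B i), g x ∂π) atTop (𝓝 0) :=
    hgint.tendsto_setIntegral_nhds_zero hsymm'
  -- difference of set integrals tends to 0
  have hA : Tendsto (fun n => (∫ x in Bn n i, ‖x - γn n i‖ ^ 2 ∂π) -
      ∫ x in B i, ‖x - γn n i‖ ^ 2 ∂π) atTop (𝓝 0) := by
    refine squeeze_zero_norm (fun n => ?_) hsd0
    simpa [Real.norm_eq_abs] using hkey n
  -- ∫_B h_n → ∫_B h
  have hC : Tendsto (fun n => ∫ x in B i, ‖x - γn n i‖ ^ 2 ∂π) atTop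
      (𝓝 (∫ x in B i, ‖x - γ i‖ ^ 2 ∂π)) := by
    by_cases h0 : 0 < (π (B i)).toReal
    · have hγi : Tendsto (fun n => γn n i) atTop (𝓝 (γ i)) := hconv i h0
      refine tendsto_integral_of_dominated_convergence g
        (fun n => ((hcont (γn n i)).aestronglyMeasurable).restrict) ?_ ?_ ?_
      · exact hgint.integrableOn
      · intro n
        filter_upwards with x
        rw [Real.norm_eq_abs, abs_of_nonneg (by positivity)]
        exact hbound _ (hD n i) x
      · filter_upwards with x
        have : Tendsto (fun n => x - γn n i) atTop (𝓝 (x - γ i)) :=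
          tendsto_const_nhds.sub hγi
        exact (this.norm).pow 2
    · have hz : π (B i) = 0 := by
        have := ENNReal.toReal_nonneg (a := π (B i))
        have h1 : (π (B i)).toReal = 0 := le_antisymm (not_lt.mp h0) this
        exact (ENNReal.toReal_eq_zero_iff _).mp h1 |>.resolve_right (measure_ne_top π _)
      have hr : π.restrict (B i) = 0 := Measure.restrict_eq_zero.mpr hz
      simp [hr]
  have := hA.add hC
  rw [zero_add] at this
  simpa using this
end

section
/- Let Z be a measurable space, A an action space, K(dz'|z,a) a transition kernel, c : Z×A → [0,∞) measurable, and suppose (g*, h, f) satisfies the average cost optimality equation: g* + h(z) = inf_{a} [c(z,a) + ∫ h(z') K(dz'|z,a)] = c(z,f(z)) + ∫ h(z') K(dz'|z,f(z)) for all z, with g* a constant. If limsup_{T→∞} (1/T) E_z^Π[h(Z_T)] = 0 for every z and every admissible policy Π, then the stationary deterministic policy Π* = {f} is average-cost optimal: g* = J(z,Π*) = inf_Π J(z,Π) where J(z,Π) = limsup_T (1/T) E_z^Π[Σ_{t=0}^{T-1} c(Z_t,A_t)]. Moreover |J(z,Π*,T) − g*| ≤ (1/T)|E_z^{Π*}[h(Z_T)]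 − h(z)| for every T ≥ 1. -/
open MeasureTheory ProbabilityTheory Filter Topology ENNReal

/-- A state-action process `(Z_t, A_t)` on a probability space which is consistent with
the controlled transition kernel `K`: conditionally on the history up to time `t`, the
next state `Z_{t+1}` has law `K(· | Z_t, A_t)`.  This models the process induced by an
arbitrary admissible (possibly randomized, history-dependent) policy. -/
structure ControlledProcess (Z A : Type*) [MeasurableSpace Z] [MeasurableSpace A]
    (K : ProbabilityTheory.Kernel (Z × A) Z) where
  Ω : Type
  mΩ : MeasurableSpace Ω
  μ : MeasureTheory.Measure Ω
  prob : MeasureTheory.IsProbabilityMeasure μ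
  Zt : ℕ → Ω → Z
  At : ℕ → Ω → A
  measZ : ∀ t, Measurable (Zt t)
  measA : ∀ t, Measurable (At t)
  cond : ∀ (t : ℕ) (F : (Fin (t + 1) → Z × A) → ℝ) (g : Z → ℝ),
    Measurable F → Measurable g → (∃ C, ∀ h, |F h| ≤ C) → (∃ C, ∀ z, |g z| ≤ C) →
    (∫ ω, F (fun s => (Zt s ω, At s ω)) * g (Zt (t + 1) ω) ∂μ)
      = ∫ ω, F (fun s => (Zt s ω, At s ω)) * (∫ z', g z' ∂(K (Zt t ω, At t ω))) ∂μ

/-- `T`-stage expected total cost of a controlled process (in `ℝ≥0∞`). -/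
noncomputable def totalCost {Z A : Type*} [MeasurableSpace Z] [MeasurableSpace A]
    {K : ProbabilityTheory.Kernel (Z × A) Z} (c : Z × A → ℝ)
    (T : ControlledProcess Z A K) (n : ℕ) : ℝ≥0∞ :=
  ∑ t ∈ Finset.range n, ∫⁻ ω, ENNReal.ofReal (c (T.Zt t ω, T.At t ω)) ∂T.μ

/-- Infinite-horizon average cost `J = limsup_T (1/T) E[Σ_{t<T} c(Z_t,A_t)]`. -/
noncomputable def avgCost {Z A : Type*} [MeasurableSpace Z] [MeasurableSpace A]
    {K : ProbabilityTheory.Kernel (Z × A) Z} (c : Z × A → ℝ)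
    (T : ControlledProcess Z A K) : ℝ≥0∞ :=
  Filter.limsup (fun n : ℕ => totalCost c T n / (n : ℝ≥0∞)) Filter.atTop

/-!
Along any admissible process, the one-step identity `E h(Z_{t+1}) = E ∫ h dK(Z_t, A_t)` turns the
ACOE inequality into `g* + E h(Z_t) - E h(Z_{t+1}) ≤ E c(Z_t, A_t)`, with equality along the
stationary policy `f`; summing telescopes to `T g* + h(z) - E h(Z_T) ≤ E Σ_{t<T} c(Z_t, A_t)`
(resp. `=`). The expectations `E h(Z_T)` are bounded in `T`: otherwise some mixture of time-shifted
copies of the process, which is again admissible, would make `h(Z_0)` non-integrable. Dividing by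
`T` and letting `T → ∞` gives both claims.
-/

attribute [local instance] ControlledProcess.mΩ ControlledProcess.prob

theorem ofReal_integral_le_lintegral_ofReal {α : Type*} [MeasurableSpace α] {μ : Measure α}
    {f : α → ℝ} (hf : Integrable f μ) :
    ENNReal.ofReal (∫ x, f x ∂μ) ≤ ∫⁻ x, ENNReal.ofReal (f x) ∂μ :=
  calc ENNReal.ofReal (∫ x, f x ∂μ) ≤ ENNReal.ofReal (∫ x, max (f x) 0 ∂μ) :=
        ENNReal.ofReal_le_ofReal (integral_mono hf hf.pos_part fun x => le_max_left _ _)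
    _ = ∫⁻ x, ENNReal.ofReal (max (f x) 0) ∂μ :=
        ofReal_integral_eq_lintegral_ofReal hf.pos_part (ae_of_all _ fun _ => le_max_right _ _)
    _ = ∫⁻ x, ENNReal.ofReal (f x) ∂μ := by simp

theorem integrable_mul_of_abs_le {α : Type*} [MeasurableSpace α] {μ : Measure α}
    [IsFiniteMeasure μ] {u v : α → ℝ} (hu : Measurable u) (hv : Measurable v)
    (hub : ∃ C, ∀ x, |u x| ≤ C) (hvb : ∃ C, ∀ x, |v x| ≤ C) :
    Integrable (fun x => u x * v x) μ := by
  obtain ⟨Cu, hCu⟩ := hub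
  obtain ⟨Cv, hCv⟩ := hvb
  exact (Integrable.of_bound hv.aestronglyMeasurable Cv (ae_of_all _ hCv)).bdd_mul
    hu.aestronglyMeasurable (ae_of_all _ hCu)

theorem abs_integral_le_of_abs_le {α : Type*} [MeasurableSpace α] {μ : Measure α}
    [IsProbabilityMeasure μ] {u : α → ℝ} {C : ℝ} (hC : ∀ x, |u x| ≤ C) :
    |∫ x, u x ∂μ| ≤ C := by
  simpa using norm_integral_le_of_norm_le_const (μ := μ) (f := u) (ae_of_all _ hC)

theorem measurable_shift {Ω β : Type*} [MeasurableSpace Ω] [MeasurableSpace β]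
    {X : ℕ → Ω → β} (hX : ∀ t, Measurable (X t)) (φ : ℕ → ℕ) (t : ℕ) :
    Measurable fun p : ℕ × Ω => X (φ p.1 + t) p.2 :=
  measurable_from_prod_countable_right fun k => hX (φ k + t)

theorem sum_range_const_add_sub (g : ℝ) (E : ℕ → ℝ) (n : ℕ) :
    ∑ t ∈ Finset.range n, (g + E t - E (t + 1)) = n * g + (E 0 - E n) := by
  rw [Finset.sum_congr rfl fun t _ => add_sub_assoc g (E t) (E (t + 1)), Finset.sum_add_distrib,
    Finset.sum_range_sub', Finset.sum_const, Finset.card_range, nsmul_eq_mul]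

theorem abs_mul_add_div_sub {n : ℕ} (hn : n ≠ 0) (g b : ℝ) :
    |(n * g + b) / n - g| = (n : ℝ)⁻¹ * |b| := by
  have hsub : (n * g + b) / n - g = (n : ℝ)⁻¹ * b := by
    field_simp
    ring
  rw [hsub, abs_mul, abs_inv, Nat.abs_cast]

theorem tendsto_ofReal_mul_add_div (g : ℝ) {b : ℕ → ℝ} (hb : ∃ C, ∀ n, |b n| ≤ C) :
    Tendsto (fun n : ℕ => ENNReal.ofReal (n * g + b n) / n) atTop (𝓝 (ENNReal.ofReal g)) := by
  obtain ⟨C, hC⟩ := hb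
  have hbn : Tendsto (fun n : ℕ => b n / n) atTop (𝓝 0) := by
    refine squeeze_zero_norm (fun n => ?_) (tendsto_const_div_atTop_nhds_zero_nat C)
    rw [Real.norm_eq_abs, abs_div, Nat.abs_cast]
    exact div_le_div_of_nonneg_right (hC n) n.cast_nonneg
  have hlim : Tendsto (fun n : ℕ => g + b n / n) atTop (𝓝 g) := by
    simpa using tendsto_const_nhds.add hbn
  refine (ENNReal.tendsto_ofReal hlim).congr' ?_
  filter_upwards [eventually_ge_atTop 1] with n hn
  have hn : (0 : ℝ) < n := by exact_mod_cast hn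
  rw [← ENNReal.ofReal_natCast, ← ENNReal.ofReal_div_of_pos hn]
  congr 1
  field_simp

namespace ControlledProcess

variable {Z A : Type*} [MeasurableSpace Z] [MeasurableSpace A] {K : Kernel (Z × A) Z}
  (T : ControlledProcess Z A K) {c : Z × A → ℝ} {g : ℝ} {h : Z → ℝ}

theorem measurable_stateAction (t : ℕ) : Measurable fun ω => (T.Zt t ω, T.At t ω) :=
  (T.measZ t).prodMk (T.measA t)

theorem map_Zt_succ [IsMarkovKernel K] (t : ℕ) :
    T.μ.map (T.Zt (t + 1)) = K ∘ₘ T.μ.map (fun ω => (T.Zt t ω, T.At t ω)) := by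
  ext s hs
  rw [← ENNReal.toReal_eq_toReal_iff' (measure_ne_top _ _) (measure_ne_top _ _),
    ← measureReal_def, ← measureReal_def]
  have hind : Measurable (s.indicator (1 : Z → ℝ)) := measurable_const.indicator hs
  have hbdd : ∃ C, ∀ z, |s.indicator (1 : Z → ℝ) z| ≤ C :=
    ⟨1, fun z => by by_cases hz : z ∈ s <;> simp [hz]⟩
  have key := T.cond t (fun _ => 1) _ measurable_const hind ⟨1, fun _ => by simp⟩ hbdd
  simp only [one_mul] at key
  rw [← integral_indicator_one hs, ← integral_indicator_one hs,
    integral_map (T.measZ _).aemeasurable hind.aestronglyMeasurable, key,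
    Measure.comp_eq_comp_const_apply, Kernel.integral_comp, Kernel.const_apply,
    integral_map (T.measurable_stateAction t).aemeasurable]
  · exact hind.stronglyMeasurable.integral_kernel.aestronglyMeasurable
  · exact (integrable_const 1).indicator hs

theorem integrable_comp_map_stateAction [IsMarkovKernel K] (hh : Measurable h) {t : ℕ}
    (hint : Integrable (fun ω => h (T.Zt (t + 1) ω)) T.μ) :
    Integrable h (K ∘ₘ T.μ.map (fun ω => (T.Zt t ω, T.At t ω))) := by
  rw [← map_Zt_succ]
  exact (integrable_map_measure hh.aestronglyMeasurable (T.measZ _).aemeasurable).2 hint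

theorem integrable_integral_kernel_stateAction [IsMarkovKernel K] (hh : Measurable h) {t : ℕ}
    (hint : Integrable (fun ω => h (T.Zt (t + 1) ω)) T.μ) :
    Integrable (fun ω => ∫ z', h z' ∂K (T.Zt t ω, T.At t ω)) T.μ := by
  have hcomp := T.integrable_comp_map_stateAction hh hint
  rw [Measure.comp_eq_comp_const_apply] at hcomp
  exact (integrable_map_measure hh.stronglyMeasurable.integral_kernel.aestronglyMeasurable
    (T.measurable_stateAction t).aemeasurable).1 hcomp.integral_comp

theorem integral_Zt_succ [IsMarkovKernel K] (hh : Measurable h) {t : ℕ}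
    (hint : Integrable (fun ω => h (T.Zt (t + 1) ω)) T.μ) :
    ∫ ω, h (T.Zt (t + 1) ω) ∂T.μ = ∫ ω, ∫ z', h z' ∂K (T.Zt t ω, T.At t ω) ∂T.μ := by
  have hcomp := T.integrable_comp_map_stateAction hh hint
  rw [Measure.comp_eq_comp_const_apply] at hcomp
  rw [← integral_map (T.measZ _).aemeasurable hh.aestronglyMeasurable, map_Zt_succ,
    Measure.comp_eq_comp_const_apply, Kernel.integral_comp hcomp, Kernel.const_apply,
    integral_map (T.measurable_stateAction t).aemeasurable
      hh.stronglyMeasurable.integral_kernel.aestronglyMeasurable]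

/-- The process `T` started at the random time `φ k`, where `k` is drawn from `ν` independently
of `T`. Shifting by `φ k + t` rather than `t + φ k` makes time `t + 1` definitionally
`(φ k + t) + 1`, so `cond` is that of `T` at time `φ k + t`. -/
noncomputable def shiftMix [IsMarkovKernel K] (ν : Measure ℕ) [IsProbabilityMeasure ν] (φ : ℕ → ℕ) :
    ControlledProcess Z A K where
  Ω := ℕ × T.Ω
  mΩ := inferInstance
  μ := ν.prod T.μ
  prob := inferInstance
  Zt t p := T.Zt (φ p.1 + t) p.2
  At t p := T.At (φ p.1 + t) p.2
  measZ := measurable_shift T.measZ φ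
  measA := measurable_shift T.measA φ
  cond t F g hF hg hFb hgb := by
    have hhist : Measurable fun p : ℕ × T.Ω =>
        fun s : Fin (t + 1) => (T.Zt (φ p.1 + s) p.2, T.At (φ p.1 + s) p.2) :=
      measurable_pi_lambda _ fun s =>
        (measurable_shift T.measZ φ s).prodMk (measurable_shift T.measA φ s)
    obtain ⟨CF, hCF⟩ := hFb
    obtain ⟨Cg, hCg⟩ := hgb
    refine (integral_prod _ ?_).trans ((integral_congr_ae (ae_of_all _ fun k => ?_)).trans
      (integral_prod _ ?_).symm)
    · exact integrable_mul_of_abs_le (hF.comp hhist)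
        (hg.comp (measurable_shift T.measZ φ (t + 1))) ⟨CF, fun _ => hCF _⟩ ⟨Cg, fun _ => hCg _⟩
    · exact T.cond (φ k + t) (fun H => F fun s => H ⟨φ k + s, by omega⟩) g
        (hF.comp (measurable_pi_lambda _ fun s => measurable_pi_apply _)) hg
        ⟨CF, fun _ => hCF _⟩ ⟨Cg, hCg⟩
    · exact integrable_mul_of_abs_le (hF.comp hhist)
        (hg.stronglyMeasurable.integral_kernel.measurable.comp
          ((measurable_shift T.measZ φ t).prodMk (measurable_shift T.measA φ t)))
        ⟨CF, fun _ => hCF _⟩ ⟨Cg, fun _ => abs_integral_le_of_abs_le hCg⟩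

/-- If the expectations were unbounded, choose times `φ k` with `|E h(Z_{φ k})| > 1 / ν{k}` for a
geometric `ν`; then `E |h(Z_0)| = ∞` for the admissible process `T.shiftMix ν φ`. -/
theorem exists_abs_integral_le [IsMarkovKernel K]
    (hint : ∀ (T : ControlledProcess Z A K) t, Integrable (fun ω => h (T.Zt t ω)) T.μ) :
    ∃ C, ∀ n, |∫ ω, h (T.Zt n ω) ∂T.μ| ≤ C := by
  set ν := geometricMeasure ⟨2⁻¹, by norm_num, by norm_num⟩
  have hν : ∀ k, ν {k} ≠ 0 := fun k => by
    rw [geometricMeasure_singleton (by simp [Subtype.ext_iff]), ne_eq, ENNReal.ofReal_eq_zero,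
      not_le]
    positivity
  by_contra! hunb
  choose φ hφ using fun k => hunb ((ν {k})⁻¹).toReal
  have hmix : Integrable (fun p : ℕ × T.Ω => h (T.Zt (φ p.1) p.2)) (ν.prod T.μ) :=
    hint (T.shiftMix ν φ) 0
  refine hmix.hasFiniteIntegral.ne ?_
  rw [lintegral_prod _ hmix.aemeasurable.enorm, lintegral_countable']
  refine top_unique ((ENNReal.tsum_const_eq_top_of_ne_zero one_ne_zero).symm.trans_le
    (ENNReal.tsum_le_tsum fun k => ?_))
  calc (1 : ℝ≥0∞) = (ν {k})⁻¹ * ν {k} :=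
        (ENNReal.inv_mul_cancel (hν k) (measure_ne_top _ _)).symm
    _ ≤ ‖∫ ω, h (T.Zt (φ k) ω) ∂T.μ‖ₑ * ν {k} := by
      gcongr
      rw [Real.enorm_eq_ofReal_abs, ← ENNReal.ofReal_toReal (ENNReal.inv_ne_top.2 (hν k))]
      exact ENNReal.ofReal_le_ofReal (hφ k).le
    _ ≤ _ := by gcongr; exact enorm_integral_le_lintegral_enorm _

theorem integrable_add_sub_integral_kernel [IsMarkovKernel K] (hh : Measurable h)
    (hint : ∀ t, Integrable (fun ω => h (T.Zt t ω)) T.μ) (g : ℝ) (t : ℕ) :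
    Integrable (fun ω => g + h (T.Zt t ω) - ∫ z', h z' ∂K (T.Zt t ω, T.At t ω)) T.μ :=
  ((integrable_const g).add (hint t)).sub
    (T.integrable_integral_kernel_stateAction hh (hint (t + 1)))

theorem integral_add_sub_integral_kernel [IsMarkovKernel K] (hh : Measurable h)
    (hint : ∀ t, Integrable (fun ω => h (T.Zt t ω)) T.μ) (g : ℝ) (t : ℕ) :
    ∫ ω, (g + h (T.Zt t ω) - ∫ z', h z' ∂K (T.Zt t ω, T.At t ω)) ∂T.μ
      = g + ∫ ω, h (T.Zt t ω) ∂T.μ - ∫ ω, h (T.Zt (t + 1) ω) ∂T.μ := by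
  have hint_add : Integrable (fun ω => g + h (T.Zt t ω)) T.μ := (integrable_const g).add (hint t)
  rw [integral_sub hint_add (T.integrable_integral_kernel_stateAction hh (hint (t + 1))),
    integral_add (integrable_const g) (hint t), integral_const,
    T.integral_Zt_succ hh (hint (t + 1))]
  simp

theorem ofReal_le_totalCost [IsMarkovKernel K] (hh : Measurable h)
    (hint : ∀ t, Integrable (fun ω => h (T.Zt t ω)) T.μ)
    (hacoe : ∀ z a, g + h z ≤ c (z, a) + ∫ z', h z' ∂K (z, a)) (n : ℕ) :
    ENNReal.ofReal (n * g + (∫ ω, h (T.Zt 0 ω) ∂T.μ - ∫ ω, h (T.Zt n ω) ∂T.μ))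
      ≤ totalCost c T n := by
  rw [← sum_range_const_add_sub g fun t => ∫ ω, h (T.Zt t ω) ∂T.μ]
  refine (Finset.le_sum_of_subadditive _ ENNReal.ofReal_zero.le
    (fun _ _ => ENNReal.ofReal_add_le) _ _).trans (Finset.sum_le_sum fun t _ => ?_)
  rw [← T.integral_add_sub_integral_kernel hh hint]
  refine (ofReal_integral_le_lintegral_ofReal
    (T.integrable_add_sub_integral_kernel hh hint g t)).trans
    (lintegral_mono fun ω => ENNReal.ofReal_le_ofReal ?_)
  linarith [hacoe (T.Zt t ω) (T.At t ω)]

theorem totalCost_eq_ofReal_sum (hc : ∀ p, 0 ≤ c p)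
    (hcint : ∀ t, Integrable (fun ω => c (T.Zt t ω, T.At t ω)) T.μ) (n : ℕ) :
    totalCost c T n
      = ENNReal.ofReal (∑ t ∈ Finset.range n, ∫ ω, c (T.Zt t ω, T.At t ω) ∂T.μ) := by
  rw [totalCost, ENNReal.ofReal_sum_of_nonneg fun t _ => integral_nonneg fun ω => hc _]
  exact Finset.sum_congr rfl fun t _ =>
    (ofReal_integral_eq_lintegral_ofReal (hcint t) (ae_of_all _ fun ω => hc _)).symm

theorem cost_eq_of_stationary {f : Z → A}
    (hacoe : ∀ z, g + h z = c (z, f z) + ∫ z', h z' ∂K (z, f z))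
    (hstat : ∀ t ω, T.At t ω = f (T.Zt t ω)) (t : ℕ) :
    (fun ω => c (T.Zt t ω, T.At t ω))
      = fun ω => g + h (T.Zt t ω) - ∫ z', h z' ∂K (T.Zt t ω, T.At t ω) := by
  ext ω
  rw [hstat]
  linarith [hacoe (T.Zt t ω)]

theorem sum_integral_cost_eq_of_stationary [IsMarkovKernel K] (hh : Measurable h)
    (hint : ∀ t, Integrable (fun ω => h (T.Zt t ω)) T.μ) {f : Z → A}
    (hacoe : ∀ z, g + h z = c (z, f z) + ∫ z', h z' ∂K (z, f z))
    (hstat : ∀ t ω, T.At t ω = f (T.Zt t ω)) (n : ℕ) :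
    ∑ t ∈ Finset.range n, ∫ ω, c (T.Zt t ω, T.At t ω) ∂T.μ
      = n * g + (∫ ω, h (T.Zt 0 ω) ∂T.μ - ∫ ω, h (T.Zt n ω) ∂T.μ) := by
  simp_rw [T.cost_eq_of_stationary hacoe hstat, T.integral_add_sub_integral_kernel hh hint]
  exact sum_range_const_add_sub g _ n

end ControlledProcess

theorem stmt_16_general {Z A : Type*} [MeasurableSpace Z] [MeasurableSpace A]
    (K : ProbabilityTheory.Kernel (Z × A) Z) [ProbabilityTheory.IsMarkovKernel K]
    (c : Z × A → ℝ) (hcpos : ∀ p, 0 ≤ c p)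
    (gstar : ℝ) (h : Z → ℝ) (hhmeas : Measurable h)
    (f : Z → A)
    (hacoe_le : ∀ z a, gstar + h z ≤ c (z, a) + ∫ z', h z' ∂(K (z, a)))
    (hacoe_eq : ∀ z, gstar + h z = c (z, f z) + ∫ z', h z' ∂(K (z, f z)))
    (hhintT : ∀ T : ControlledProcess Z A K, ∀ t : ℕ,
      Integrable (fun ω => h (T.Zt t ω)) T.μ)
    (z : Z) :
    (∀ T : ControlledProcess Z A K, (∀ ω, T.Zt 0 ω = z) →
        ENNReal.ofReal gstar ≤ avgCost c T)
    ∧ (∀ T : ControlledProcess Z A K, (∀ ω, T.Zt 0 ω = z) →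
        (∀ t ω, T.At t ω = f (T.Zt t ω)) →
        avgCost c T = ENNReal.ofReal gstar
        ∧ ∀ n : ℕ, 1 ≤ n →
          |(totalCost c T n).toReal / (n : ℝ) - gstar|
            ≤ ((n : ℝ))⁻¹ * |(∫ ω, h (T.Zt n ω) ∂T.μ) - h z|) := by
  have hstart : ∀ T : ControlledProcess Z A K, (∀ ω, T.Zt 0 ω = z) →
      ∫ ω, h (T.Zt 0 ω) ∂T.μ = h z := fun T hz0 => by simp [hz0]
  have hbdd : ∀ T : ControlledProcess Z A K, ∃ C, ∀ n, |h z - ∫ ω, h (T.Zt n ω) ∂T.μ| ≤ C :=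
    fun T => by
      obtain ⟨C, hC⟩ := T.exists_abs_integral_le hhintT
      exact ⟨|h z| + C, fun n => (abs_sub _ _).trans (by linarith [hC n])⟩
  refine ⟨fun T hz0 => ?_, fun T hz0 hstat => ?_⟩
  · rw [avgCost, ← (tendsto_ofReal_mul_add_div gstar (hbdd T)).limsup_eq]
    refine limsup_le_limsup (Eventually.of_forall fun n => ENNReal.div_le_div_right ?_ _)
    simpa only [hstart T hz0] using T.ofReal_le_totalCost hhmeas (hhintT T) hacoe_le n
  have hcint : ∀ t, Integrable (fun ω => c (T.Zt t ω, T.At t ω)) T.μ := fun t => by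
    rw [T.cost_eq_of_stationary hacoe_eq hstat t]
    exact T.integrable_add_sub_integral_kernel hhmeas (hhintT T) gstar t
  have hsum := T.sum_integral_cost_eq_of_stationary hhmeas (hhintT T) hacoe_eq hstat
  simp only [hstart T hz0] at hsum
  have hcost : ∀ n, totalCost c T n
      = ENNReal.ofReal (n * gstar + (h z - ∫ ω, h (T.Zt n ω) ∂T.μ)) := fun n => by
    rw [T.totalCost_eq_ofReal_sum hcpos hcint, hsum]
  refine ⟨by simpa only [avgCost, hcost] using
    (tendsto_ofReal_mul_add_div gstar (hbdd T)).limsup_eq, fun n hn => ?_⟩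
  have hnonneg : 0 ≤ n * gstar + (h z - ∫ ω, h (T.Zt n ω) ∂T.μ) :=
    hsum n ▸ Finset.sum_nonneg fun t _ => integral_nonneg fun ω => hcpos _
  rw [hcost, ENNReal.toReal_ofReal hnonneg, abs_mul_add_div_sub (by omega), abs_sub_comm]

/-- Verification theorem for the average cost optimality equation (ACOE): if
`(g*, h, f)` is a canonical triplet with constant `g*` and
`limsup_T (1/T) E_z^Π[h(Z_T)] = 0` for every initial state and every admissible policy,
then the stationary deterministic policy `f` is average-cost optimal with optimal value
`g*`, and `|J(z,Π*,T) − g*| ≤ (1/T)|E[h(Z_T)] − h(z)|` for every `T ≥ 1`. -/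
theorem stmt_16 {Z A : Type*} [MeasurableSpace Z] [MeasurableSpace A]
    (K : ProbabilityTheory.Kernel (Z × A) Z) [ProbabilityTheory.IsMarkovKernel K]
    (c : Z × A → ℝ) (hcmeas : Measurable c) (hcpos : ∀ p, 0 ≤ c p)
    (gstar : ℝ) (h : Z → ℝ) (hhmeas : Measurable h)
    (f : Z → A) (hfmeas : Measurable f)
    (hhint : ∀ z a, Integrable h (K (z, a)))
    (hacoe_le : ∀ z a, gstar + h z ≤ c (z, a) + ∫ z', h z' ∂(K (z, a)))
    (hacoe_eq : ∀ z, gstar + h z = c (z, f z) + ∫ z', h z' ∂(K (z, f z)))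
    (hhintT : ∀ T : ControlledProcess Z A K, ∀ t : ℕ,
      Integrable (fun ω => h (T.Zt t ω)) T.μ)
    (htrans : ∀ T : ControlledProcess Z A K,
      Filter.limsup (fun n : ℕ => ((n : ℝ))⁻¹ * ∫ ω, h (T.Zt n ω) ∂T.μ) Filter.atTop = 0)
    (z : Z) :
    (∀ T : ControlledProcess Z A K, (∀ ω, T.Zt 0 ω = z) →
        ENNReal.ofReal gstar ≤ avgCost c T)
    ∧ (∀ T : ControlledProcess Z A K, (∀ ω, T.Zt 0 ω = z) →
        (∀ t ω, T.At t ω = f (T.Zt t ω)) →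
        avgCost c T = ENNReal.ofReal gstar
        ∧ ∀ n : ℕ, 1 ≤ n →
          |(totalCost c T n).toReal / (n : ℝ) - gstar|
            ≤ ((n : ℝ))⁻¹ * |(∫ ω, h (T.Zt n ω) ∂T.μ) - h z|) :=
  stmt_16_general K c hcpos gstar h hhmeas f hacoe_le hacoe_eq hhintT z
end
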